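/- (Core of Theorem 1.) Let L ≥ 1, w ≥ 1, d_r ≥ 2 be integers with L ≥ 2w − 1, let ε ∈ [0,1) and β ≥ 0 be reals, and let P_L be the associated L×L matrix with c = (d_r − 1)·exp(−β(1−ε)). If every real eigenvalue μ of P_L satisfies μ < 1, then (d_r − 1)·exp(−β(1−ε))·(1 − (w−1)(w+1)/(3wL)) < 1; equivalently, β > (1/(1−ε)) · ln[(d_r − 1)·(1 − (w−1)(w+1)/(3wL))]. -/

import Mathlib

/-!
If a real symmetric matrix has all eigenvalues below `1`, expanding `x` in an orthonormal
eigenbasis gives `xᵀ P x < ‖x‖²`; at the all-ones vector this says that the entries of `P_L` sum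
to less than `L`. For `w ≤ L` the entries `(w - |i - j|)₊` of the band matrix sum to
`L w² - (w³ - w) / 3`, so the stability condition becomes
`c (1 - (w - 1)(w + 1) / (3 w L)) < 1`, and taking logarithms gives the bound on `β`.
-/

/-- The Jacobian matrix `P_L` of density evolution at the zero fixed point:
`(P_L)_{i,j} = c (w - |i-j|)/w²` for `|i-j| ≤ w` and `0` otherwise, where
`c = (d_r - 1) exp(-β(1-ε))`. -/
noncomputable def PL (L w dr : ℕ) (ε β : ℝ) : Matrix (Fin L) (Fin L) ℝ :=
  fun i j =>
    if |((i : ℕ) : ℝ) - ((j : ℕ) : ℝ)| ≤ (w : ℝ) then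
      ((dr : ℝ) - 1) * Real.exp (-β * (1 - ε)) *
        ((w : ℝ) - |((i : ℕ) : ℝ) - ((j : ℕ) : ℝ)|) / (w : ℝ) ^ 2
    else 0

open Finset Matrix Module.End

theorem LinearMap.IsSymmetric.real_inner_map_self_lt {E : Type*} [NormedAddCommGroup E]
    [InnerProductSpace ℝ E] [FiniteDimensional ℝ E] {T : E →ₗ[ℝ] E} (hT : T.IsSymmetric)
    {t : ℝ} (ht : ∀ μ, HasEigenvalue T μ → μ < t) {x : E} (hx : x ≠ 0) :
    inner ℝ (T x) x < t * ‖x‖ ^ 2 := by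
  set b := hT.eigenvectorBasis rfl
  set ev := hT.eigenvalues rfl
  have hquad : inner ℝ (T x) x = ∑ i, ev i * inner ℝ x (b i) ^ 2 := by
    rw [← b.sum_inner_mul_inner (T x) x]
    refine sum_congr rfl fun i _ => ?_
    rw [hT, hT.apply_eigenvectorBasis, real_inner_smul_right, real_inner_comm x]
    simp only [RCLike.ofReal_real_eq_id, id_eq]
    ring
  have hnorm : ‖x‖ ^ 2 = ∑ i, inner ℝ x (b i) ^ 2 := by
    rw [← real_inner_self_eq_norm_sq, ← b.sum_inner_mul_inner x x]
    simp only [real_inner_comm x, sq]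
  obtain ⟨i, hi⟩ : ∃ i, inner ℝ x (b i) ≠ 0 := by
    by_contra! h
    simp [h] at hnorm
    exact hx hnorm
  rw [hquad, hnorm, mul_sum]
  refine sum_lt_sum (fun j _ => ?_) ⟨i, mem_univ i, ?_⟩
  · exact mul_le_mul_of_nonneg_right (ht _ (hT.hasEigenvalue_eigenvalues rfl j)).le (sq_nonneg _)
  · exact mul_lt_mul_of_pos_right (ht _ (hT.hasEigenvalue_eigenvalues rfl i)) (by positivity)

section HermitianMatrix

variable {n : Type*} [Fintype n] [DecidableEq n] {A : Matrix n n ℝ} {t : ℝ}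

theorem Matrix.IsHermitian.dotProduct_mulVec_lt (hA : A.IsHermitian)
    (ht : ∀ (μ : ℝ) (v : n → ℝ), v ≠ 0 → A *ᵥ v = μ • v → μ < t) {x : n → ℝ} (hx : x ≠ 0) :
    x ⬝ᵥ A *ᵥ x < t * (x ⬝ᵥ x) := by
  have key := (isSymmetric_toEuclideanLin_iff.mpr hA).real_inner_map_self_lt
    (t := t) (x := WithLp.toLp 2 x) ?_ (by simpa using hx)
  · rw [← real_inner_self_eq_norm_sq] at key
    simp only [EuclideanSpace.inner_eq_star_dotProduct] at key
    simpa [dotProduct_comm x] using key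
  · intro μ hμ
    obtain ⟨v, hv⟩ := hμ.exists_hasEigenvector
    refine ht μ v.ofLp (by simpa using hv.2) ?_
    simpa using congrArg WithLp.ofLp hv.apply_eq_smul

theorem Matrix.IsHermitian.sum_sum_lt [Nonempty n] (hA : A.IsHermitian)
    (ht : ∀ (μ : ℝ) (v : n → ℝ), v ≠ 0 → A *ᵥ v = μ • v → μ < t) :
    ∑ i, ∑ j, A i j < t * Fintype.card n := by
  simpa [dotProduct, mulVec] using hA.dotProduct_mulVec_lt ht (x := 1) one_ne_zero

end HermitianMatrix

theorem Finset.sum_range_succ_sum_range_succ_dist {M : Type*} [AddCommMonoid M] (g : ℕ → M)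
    (L : ℕ) :
    ∑ i ∈ range (L + 1), ∑ j ∈ range (L + 1), g (i.dist j) =
      ∑ i ∈ range L, ∑ j ∈ range L, g (i.dist j) + 2 • ∑ k ∈ range L, g (k + 1) + g 0 := by
  have hrow : ∑ i ∈ range L, g (i.dist L) = ∑ k ∈ range L, g (k + 1) := by
    rw [← sum_range_reflect]
    refine sum_congr rfl fun i hi => ?_
    have := mem_range.mp hi
    rw [Nat.dist_eq_sub_of_le (by omega)]
    congr 1
    omega
  simp only [sum_range_succ, sum_add_distrib, Nat.dist_self]
  simp only [Nat.dist_comm L, hrow]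
  abel

theorem two_mul_sum_range_tsub_succ_of_le {w L : ℕ} (h : L ≤ w) :
    2 * ∑ k ∈ range L, (w - (k + 1)) + L * (L + 1) = 2 * L * w := by
  induction L with
  | zero => simp
  | succ L ih =>
    rw [sum_range_succ, mul_add, ← add_rotate]
    have := ih (by omega)
    zify [h] at this ⊢
    linear_combination this

theorem two_mul_sum_range_tsub_succ_of_ge {w L : ℕ} (h : w ≤ L) :
    2 * ∑ k ∈ range L, (w - (k + 1)) + w = w * w := by
  induction L, h using Nat.le_induction with
  | base => linarith [two_mul_sum_range_tsub_succ_of_le (le_refl w)]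
  | succ L hL ih => rwa [sum_range_succ, Nat.sub_eq_zero_of_le (by omega), add_zero]

-- In `ℕ`, the truncated difference `w - i.dist j` is the band profile `(w - |i - j|)₊`.

theorem three_mul_sum_tsub_dist_of_le {w L : ℕ} (h : L ≤ w) :
    3 * ∑ i ∈ range L, ∑ j ∈ range L, (w - i.dist j) + L ^ 3 = 3 * L ^ 2 * w + L := by
  induction L with
  | zero => simp
  | succ L ih =>
    rw [sum_range_succ_sum_range_succ_dist (w - ·), Nat.sub_zero, smul_eq_mul]
    linarith [ih (by omega), two_mul_sum_range_tsub_succ_of_le (w := w) (L := L) (by omega)]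

theorem three_mul_sum_tsub_dist_of_ge {w L : ℕ} (h : w ≤ L) :
    3 * ∑ i ∈ range L, ∑ j ∈ range L, (w - i.dist j) + w ^ 3 = 3 * L * w ^ 2 + w := by
  induction L, h using Nat.le_induction with
  | base => linarith [three_mul_sum_tsub_dist_of_le (le_refl w)]
  | succ L hL ih =>
    rw [sum_range_succ_sum_range_succ_dist (w - ·), Nat.sub_zero, smul_eq_mul]
    linarith [two_mul_sum_range_tsub_succ_of_ge hL]

theorem Nat.cast_dist {R : Type*} [CommRing R] [LinearOrder R] [IsStrictOrderedRing R]
    (i j : ℕ) : ((i.dist j : ℕ) : R) = |(i : R) - j| := by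
  rcases le_total i j with h | h
  · rw [Nat.dist_eq_sub_of_le h, abs_sub_comm, Nat.cast_sub h, abs_of_nonneg (by simpa)]
  · rw [Nat.dist_eq_sub_of_le_right h, Nat.cast_sub h, abs_of_nonneg (by simpa)]

theorem PL_apply (L w dr : ℕ) (ε β : ℝ) (i j : Fin L) :
    PL L w dr ε β i j =
      ((dr : ℝ) - 1) * Real.exp (-β * (1 - ε)) * ((w - (i : ℕ).dist j : ℕ) : ℝ) / (w : ℝ) ^ 2 := by
  simp only [PL, ← Nat.cast_dist, Nat.cast_le]
  split_ifs with h
  · rw [Nat.cast_sub h]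
  · rw [Nat.sub_eq_zero_of_le (by omega)]
    simp

theorem PL_isHermitian (L w dr : ℕ) (ε β : ℝ) : (PL L w dr ε β).IsHermitian := by
  ext i j
  simp [PL_apply, Nat.dist_comm]

theorem sum_sum_PL {L w : ℕ} (h : w ≤ L) (dr : ℕ) (ε β : ℝ) :
    ∑ i, ∑ j, PL L w dr ε β i j =
      ((dr : ℝ) - 1) * Real.exp (-β * (1 - ε)) * (L * w ^ 2 - (w ^ 3 - w) / 3) / (w : ℝ) ^ 2 := by
  have hnat := three_mul_sum_tsub_dist_of_ge h
  rw [← Fin.sum_univ_eq_sum_range (fun i => ∑ j ∈ range L, (w - i.dist j))] at hnat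
  simp only [← Fin.sum_univ_eq_sum_range (fun j => w - Nat.dist _ j)] at hnat
  have hreal : ∑ i : Fin L, ∑ j : Fin L, ((w - (i : ℕ).dist j : ℕ) : ℝ) =
      L * w ^ 2 - (w ^ 3 - w) / 3 := by
    have := congrArg (Nat.cast : ℕ → ℝ) hnat
    push_cast at this
    linarith
  simp only [PL_apply, ← sum_div, ← mul_sum, hreal]

theorem Real.log_lt_of_mul_exp_neg_lt_one {a b : ℝ} (ha : 0 < a) (h : a * Real.exp (-b) < 1) :
    Real.log a < b := by
  rwa [Real.exp_neg, ← div_eq_mul_inv, div_lt_one (Real.exp_pos b), ← Real.log_lt_iff_lt_exp ha] at h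

theorem stmt_7_general (L w dr : ℕ) (hw : 1 ≤ w) (hdr : 2 ≤ dr)
    (hLw : 2 * w - 1 ≤ L) (ε β : ℝ) (hε : ε ∈ Set.Ico (0 : ℝ) 1)
    (hstab : ∀ (μ : ℝ) (v : Fin L → ℝ), v ≠ 0 →
      (PL L w dr ε β).mulVec v = μ • v → μ < 1) :
    ((dr : ℝ) - 1) * Real.exp (-β * (1 - ε)) *
        (1 - ((w : ℝ) - 1) * ((w : ℝ) + 1) / (3 * (w : ℝ) * (L : ℝ))) < 1 ∧
    β > (1 / (1 - ε)) *
        Real.log (((dr : ℝ) - 1) *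
          (1 - ((w : ℝ) - 1) * ((w : ℝ) + 1) / (3 * (w : ℝ) * (L : ℝ)))) := by
  have hwL : w ≤ L := by omega
  have hw₀ : (0 : ℝ) < w := by exact_mod_cast hw
  have hwL' : (w : ℝ) ≤ L := by exact_mod_cast hwL
  have hL₀ : (0 : ℝ) < L := hw₀.trans_le hwL'
  have hdr' : (1 : ℝ) < dr := by exact_mod_cast hdr
  set q : ℝ := 1 - ((w : ℝ) - 1) * ((w : ℝ) + 1) / (3 * (w : ℝ) * (L : ℝ)) with hq_def
  set c := ((dr : ℝ) - 1) * Real.exp (-β * (1 - ε))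
  have : NeZero L := ⟨by omega⟩
  have hsum := (PL_isHermitian L w dr ε β).sum_sum_lt hstab
  have hrow : (L * w ^ 2 - (w ^ 3 - w) / 3) / (w : ℝ) ^ 2 = q * L := by
    rw [hq_def]
    field_simp
    ring
  rw [sum_sum_PL hwL, Fintype.card_fin, mul_div_assoc, hrow, ← mul_assoc] at hsum
  have hstable : c * q < 1 := lt_of_mul_lt_mul_right hsum hL₀.le
  refine ⟨hstable, ?_⟩
  have hq : 0 < q := by
    rw [sub_pos, div_lt_one (by positivity)]
    nlinarith
  have hlog : Real.log ((dr - 1) * q) < β * (1 - ε) := by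
    refine Real.log_lt_of_mul_exp_neg_lt_one (by nlinarith) ?_
    rwa [neg_mul_eq_neg_mul, mul_right_comm]
  rw [gt_iff_lt, one_div, inv_mul_lt_iff₀ (by linarith [hε.2])]
  linarith

/-- core of Theorem 1: if every real eigenvalue of `P_L` is
less than 1 (stability of the zero fixed point), then
`(d_r-1)exp(-β(1-ε))(1-(w-1)(w+1)/(3wL)) < 1`; equivalently
`β > (1/(1-ε)) ln[(d_r-1)(1-(w-1)(w+1)/(3wL))]`. -/
theorem stmt_7 (L w dr : ℕ) (hL : 1 ≤ L) (hw : 1 ≤ w) (hdr : 2 ≤ dr)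
    (hLw : 2 * w - 1 ≤ L) (ε β : ℝ) (hε : ε ∈ Set.Ico (0 : ℝ) 1) (hβ : 0 ≤ β)
    (hstab : ∀ (μ : ℝ) (v : Fin L → ℝ), v ≠ 0 →
      (PL L w dr ε β).mulVec v = μ • v → μ < 1) :
    ((dr : ℝ) - 1) * Real.exp (-β * (1 - ε)) *
        (1 - ((w : ℝ) - 1) * ((w : ℝ) + 1) / (3 * (w : ℝ) * (L : ℝ))) < 1 ∧
    β > (1 / (1 - ε)) *
        Real.log (((dr : ℝ) - 1) *
          (1 - ((w : ℝ) - 1) * ((w : ℝ) + 1) / (3 * (w : ℝ) * (L : ℝ)))) :=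
  stmt_7_general L w dr hw hdr hLw ε β hε hstab
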